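/- (Theorem 3.1(ii), stationarity of cluster points) Every cluster point x* of {x^k} is a first-order stationary point of F(·, 0): for every index i with x_i* ≠ 0, one has ∇_i f(x*) + λ p |x_i*|^{p−1} sign(x_i*) = 0. -/

import Mathlib

open Filter
open scoped BigOperators InnerProductSpace

noncomputable section

/-- Real n-dimensional Euclidean space. -/
abbrev Vec (n : ℕ) := EuclideanSpace ℝ (Fin n)

/-- The smoothed objective `F(x, ε) = f(x) + λ ∑ᵢ (|xᵢ| + εᵢ)^p`. -/
def Fobj (n : ℕ) (p lam : ℝ) (f : Vec n → ℝ) (z : Vec n) (ε : Fin n → ℝ) : ℝ :=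
  f z + lam * ∑ i, (|z i| + ε i) ^ p

/-- The merit function `ψ(x, y, ε) = F(x, ε) + (β/2)‖x − y‖²`. -/
def psiObj (n : ℕ) (p lam β : ℝ) (f : Vec n → ℝ) (z y : Vec n) (ε : Fin n → ℝ) : ℝ :=
  Fobj n p lam f z ε + β / 2 * ‖z - y‖ ^ 2

/-- The weighted-ℓ₁ subproblem objective at iteration `k`:
`⟨∇f(yₖ), z⟩ + (β/2)‖z − yₖ‖² + λ ∑ᵢ wᵢᵏ |zᵢ|` with `wᵢᵏ = p(|xᵢᵏ| + εᵢᵏ)^{p−1}`. -/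
def subObj (n : ℕ) (p lam β : ℝ) (f : Vec n → ℝ) (xk yk : Vec n) (εk : Fin n → ℝ)
    (z : Vec n) : ℝ :=
  ⟪gradient f yk, z⟫_ℝ + β / 2 * ‖z - yk‖ ^ 2
    + lam * ∑ i, (p * (|xk i| + εk i) ^ (p - 1)) * |z i|

/-- All the hypotheses of the EIRL1 algorithm (Algorithm 1) together with
Assumption 2.1.  The convention `x⁻¹ = x⁰` is encoded through truncated
subtraction on ℕ (`x (k-1) = x 0` for `k = 0`). -/
structure EIRL1 (n : ℕ) (p lam β Lf μ αbar : ℝ) (f : Vec n → ℝ)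
    (x y : ℕ → Vec n) (ε : ℕ → Fin n → ℝ) (α : ℕ → ℝ) : Prop where
  hn : 1 ≤ n
  hp0 : 0 < p
  hp1 : p < 1
  hlam : 0 < lam
  hμ0 : 0 < μ
  hμ1 : μ < 1
  hLf : 0 ≤ Lf
  hβ : Lf < β
  hconv : ConvexOn ℝ Set.univ f
  hdiff : ContDiff ℝ 1 f
  hlip : ∀ a b, ‖gradient f a - gradient f b‖ ≤ Lf * ‖a - b‖
  hαbar0 : 0 ≤ αbar
  hαbar1 : αbar < 1
  hα0 : ∀ k, 0 ≤ α k
  hα1 : ∀ k, α k ≤ αbar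
  hε0 : ∀ i, 0 < ε 0 i
  hεpos : ∀ k i, 0 < ε (k + 1) i
  hεdec : ∀ k i, ε (k + 1) i ≤ μ * ε k i
  hy : ∀ k, y k = x k + α k • (x k - x (k - 1))
  hmin : ∀ k z, z ≠ x (k + 1) →
    subObj n p lam β f (x k) (y k) (ε k) (x (k + 1)) < subObj n p lam β f (x k) (y k) (ε k) z
  hlevel : Bornology.IsBounded {z : Vec n | Fobj n p lam f z 0 ≤ Fobj n p lam f (x 0) (ε 0)}

/-!
Each step minimizes a `β`-strongly convex surrogate that majorizes `F(·, εᵏ⁺¹)` (descent lemma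
for `f`, tangent lines of the concave `t ↦ tᵖ`, `εᵏ⁺¹ ≤ εᵏ`) and at `xᵏ` lies below `ψ(xᵏ, yᵏ, εᵏ)`
(convexity of `f`). Hence `ψ(xᵏ, xᵏ⁻¹, εᵏ)` drops by at least
`β/2 (1 - ᾱ²) ‖xᵏ - xᵏ⁻¹‖²` per step; it is bounded below because the iterates stay in the bounded
level set, so `xᵏ⁺¹ - xᵏ → 0` and `yᵏ - xᵏ → 0`. Along a subsequence `xᵏ → x*` we get
`xᵏ⁺¹, yᵏ → x*` and `εᵏ → 0`, and the optimality condition of the subproblem in coordinate `i`,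
valid as soon as `xᵢᵏ⁺¹` has the sign of `xᵢ* ≠ 0`, passes to the limit.
-/

open Set
open scoped Topology

lemma rpow_le_rpow_add_mul_sub {p a b : ℝ} (hp0 : 0 ≤ p) (hp1 : p ≤ 1) (ha : 0 < a) (hb : 0 ≤ b) :
    b ^ p ≤ a ^ p + p * a ^ (p - 1) * (b - a) := by
  have hbern := rpow_one_add_le_one_add_mul_self (s := b / a - 1)
    (by linarith [div_nonneg hb ha.le]) hp0 hp1
  rw [add_sub_cancel, Real.div_rpow hb ha.le, div_le_iff₀ (by positivity)] at hbern
  rw [Real.rpow_sub_one ha.ne']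
  calc b ^ p ≤ (1 + p * (b / a - 1)) * a ^ p := hbern
    _ = a ^ p + p * (a ^ p / a) * (b - a) := by field_simp

lemma Real.sign_eq_coe_sign (x : ℝ) : Real.sign x = (SignType.sign x : ℝ) := by
  rcases lt_trichotomy x 0 with hx | rfl | hx
  · simp [Real.sign_of_neg hx, _root_.sign_neg hx]
  · simp
  · simp [Real.sign_of_pos hx, sign_pos hx]

lemma Real.eventually_sign_eq {a : ℝ} (ha : a ≠ 0) : ∀ᶠ b in 𝓝 a, Real.sign b = Real.sign a := by
  rcases ha.lt_or_gt with ha | ha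
  · filter_upwards [gt_mem_nhds ha] with b hb
    rw [Real.sign_of_neg hb, Real.sign_of_neg ha]
  · filter_upwards [lt_mem_nhds ha] with b hb
    rw [Real.sign_of_pos hb, Real.sign_of_pos ha]

lemma summable_of_succ_add_le {S d : ℕ → ℝ} {m : ℝ} (hd : ∀ k, 0 ≤ d k)
    (hS : ∀ k, S (k + 1) + d k ≤ S k) (hm : ∀ k, m ≤ S k) : Summable d := by
  refine summable_of_sum_range_le (c := S 0 - m) hd fun N => ?_
  calc ∑ k ∈ Finset.range N, d k ≤ ∑ k ∈ Finset.range N, (S k - S (k + 1)) :=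
        Finset.sum_le_sum fun k _ => by linarith [hS k]
    _ = S 0 - S N := Finset.sum_range_sub' S N
    _ ≤ S 0 - m := by linarith [hm N]

section Smooth

variable {E : Type*} [NormedAddCommGroup E] [InnerProductSpace ℝ E] [CompleteSpace E] {f : E → ℝ}

lemma hasDerivAt_comp_add_smul (hf : Differentiable ℝ f) (a v : E) (t : ℝ) :
    HasDerivAt (fun s : ℝ => f (a + s • v)) ⟪gradient f (a + t • v), v⟫_ℝ t := by
  have hline : HasDerivAt (fun s : ℝ => a + s • v) v t := by
    simpa using ((hasDerivAt_id t).smul_const v).const_add a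
  have := (hf (a + t • v)).hasGradientAt.hasFDerivAt.comp_hasDerivAt t hline
  rwa [InnerProductSpace.toDual_apply_apply] at this

lemma ConvexOn.add_inner_gradient_le (hconv : ConvexOn ℝ univ f) (hf : Differentiable ℝ f)
    (a b : E) : f a + ⟪gradient f a, b - a⟫_ℝ ≤ f b := by
  have hline : ConvexOn ℝ univ fun s : ℝ => f (a + s • (b - a)) := by
    have hfun : (fun s : ℝ => f (a + s • (b - a))) = f ∘ AffineMap.lineMap a b := by
      funext s
      simp [AffineMap.lineMap_apply, add_comm]
    simpa [hfun] using hconv.comp_affineMap (AffineMap.lineMap a b)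
  have hd : HasDerivAt (fun s : ℝ => f (a + s • (b - a))) ⟪gradient f a, b - a⟫_ℝ 0 := by
    simpa using hasDerivAt_comp_add_smul hf a (b - a) 0
  have := hline.le_slope_of_hasDerivAt (mem_univ 0) (mem_univ 1) one_pos hd
  simp only [slope_def_field, one_smul, zero_smul, add_zero, add_sub_cancel, sub_zero,
    div_one] at this
  linarith

lemma le_add_inner_gradient_add_sq (hf : Differentiable ℝ f) {L : ℝ}
    (hlip : ∀ a b, ‖gradient f a - gradient f b‖ ≤ L * ‖a - b‖) (a b : E) :
    f b ≤ f a + ⟪gradient f a, b - a⟫_ℝ + L / 2 * ‖b - a‖ ^ 2 := by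
  set v := b - a
  set h : ℝ → ℝ := fun t => f (a + t • v) - t * ⟪gradient f a, v⟫_ℝ - L / 2 * t ^ 2 * ‖v‖ ^ 2
  have hderiv : ∀ t, HasDerivAt h
      (⟪gradient f (a + t • v) - gradient f a, v⟫_ℝ - L * t * ‖v‖ ^ 2) t := by
    intro t
    refine (((hasDerivAt_comp_add_smul hf a v t).fun_sub
      ((hasDerivAt_id t).mul_const ⟪gradient f a, v⟫_ℝ)).fun_sub
      (((hasDerivAt_pow 2 t).const_mul (L / 2)).mul_const (‖v‖ ^ 2))).congr_deriv ?_
    simp only [inner_sub_left]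
    ring
  have hnonpos : ∀ t ∈ interior (Icc (0 : ℝ) 1), deriv h t ≤ 0 := by
    intro t ht
    rw [interior_Icc] at ht
    have hlip' : ‖gradient f (a + t • v) - gradient f a‖ ≤ L * (t * ‖v‖) := by
      simpa [norm_smul, abs_of_pos ht.1] using hlip (a + t • v) a
    calc deriv h t
        ≤ ‖gradient f (a + t • v) - gradient f a‖ * ‖v‖ - L * t * ‖v‖ ^ 2 := by
          rw [(hderiv t).deriv]
          gcongr
          exact real_inner_le_norm _ _
      _ ≤ L * (t * ‖v‖) * ‖v‖ - L * t * ‖v‖ ^ 2 := by gcongr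
      _ = 0 := by ring
  have hanti : AntitoneOn h (Icc 0 1) :=
    antitoneOn_of_deriv_nonpos (convex_Icc 0 1)
      (fun t _ => (hderiv t).continuousAt.continuousWithinAt)
      (fun t _ => (hderiv t).differentiableAt.differentiableWithinAt) hnonpos
  have := hanti (left_mem_Icc.2 zero_le_one) (right_mem_Icc.2 zero_le_one) zero_le_one
  simp only [h, v, one_smul, zero_smul, add_zero, add_sub_cancel] at this
  linarith

lemma ContDiff.continuous_gradient (hf : ContDiff ℝ 1 f) : Continuous (gradient f) :=
  (InnerProductSpace.toDual ℝ E).symm.continuous.comp (hf.continuous_fderiv one_ne_zero)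

end Smooth

section StrongConvexity
variable {E : Type*} [NormedAddCommGroup E] [InnerProductSpace ℝ E] {s : Set E} {φ : ℝ → ℝ}
  {m : ℝ} {f g : E → ℝ}

lemma UniformConvexOn.add_convexOn (hf : UniformConvexOn s φ f) (hg : ConvexOn ℝ s g) :
    UniformConvexOn s φ (f + g) := by
  simpa using hf.add (uniformConvexOn_zero.2 hg)

lemma strongConvexOn_univ_mul_norm_sub_sq (m : ℝ) (y : E) :
    StrongConvexOn univ m fun z => m / 2 * ‖z - y‖ ^ 2 := by
  rw [strongConvexOn_iff_convex]
  refine ((convexOn_const (m / 2 * ‖y‖ ^ 2) convex_univ).add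
    ((innerSL ℝ (-m • y)).toLinearMap.convexOn convex_univ)).congr fun z _ => ?_
  simp only [Pi.add_apply, ContinuousLinearMap.coe_coe, innerSL_apply_apply, inner_smul_left,
    norm_sub_sq_real, real_inner_comm y z]
  simp
  ring

lemma StrongConvexOn.add_sq_le_of_isMinOn {a z : E} (hf : StrongConvexOn s m f)
    (hmin : IsMinOn f s a) (ha : a ∈ s) (hz : z ∈ s) :
    f a + m / 2 * ‖z - a‖ ^ 2 ≤ f z := by
  have key : ∀ t ∈ Ioo (0 : ℝ) 1, f a + (1 - t) * (m / 2 * ‖z - a‖ ^ 2) ≤ f z := by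
    intro t ht
    have hmix := hf.2 hz ha ht.1.le (sub_nonneg.2 ht.2.le) (add_sub_cancel t 1)
    have hle : f a ≤ f (t • z + (1 - t) • a) :=
      hmin (hf.1 hz ha ht.1.le (sub_nonneg.2 ht.2.le) (add_sub_cancel t 1))
    simp only [smul_eq_mul] at hmix
    refine le_of_mul_le_mul_left ?_ ht.1
    linarith
  have hlim : Tendsto (fun t : ℝ => f a + (1 - t) * (m / 2 * ‖z - a‖ ^ 2)) (𝓝[>] 0)
      (𝓝 (f a + (1 - 0) * (m / 2 * ‖z - a‖ ^ 2))) :=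
    tendsto_nhdsWithin_of_tendsto_nhds (Continuous.tendsto (by fun_prop) 0)
  simpa using le_of_tendsto hlim (eventually_of_mem (Ioo_mem_nhdsGT one_pos) key)

end StrongConvexity

lemma convexOn_univ_sum_mul_abs {ι : Type*} [Fintype ι] {w : ι → ℝ} (hw : ∀ i, 0 ≤ w i) :
    ConvexOn ℝ univ fun z : EuclideanSpace ℝ ι => ∑ i, w i * |z i| := by
  refine ⟨convex_univ, fun x _ y _ a b ha hb hab => ?_⟩
  simp only [smul_eq_mul, Finset.mul_sum, ← Finset.sum_add_distrib]
  gcongr with i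
  calc w i * |(a • x + b • y) i| ≤ w i * (a * |x i| + b * |y i|) := by
        refine mul_le_mul_of_nonneg_left ?_ (hw i)
        simpa [abs_mul, abs_of_nonneg ha, abs_of_nonneg hb] using abs_add_le (a * x i) (b * y i)
    _ = a * (w i * |x i|) + b * (w i * |y i|) := by ring

lemma Filter.Tendsto.comp_of_tendsto_sub {E : Type*} [NormedAddCommGroup E] {u v : ℕ → E}
    {φ : ℕ → ℕ} {a : E} (hu : Tendsto (u ∘ φ) atTop (𝓝 a)) (hφ : Tendsto φ atTop atTop)
    (hvu : Tendsto (fun k => v k - u k) atTop (𝓝 0)) : Tendsto (v ∘ φ) atTop (𝓝 a) := by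
  simpa [Function.comp_def] using hu.add (hvu.comp hφ)

section Subproblem

variable {n : ℕ} {p lam β : ℝ} {f : Vec n → ℝ} {xk yk : Vec n} {εk : Fin n → ℝ}

lemma strongConvexOn_subObj (hlam : 0 ≤ lam) (hp : 0 ≤ p) (hεk : ∀ i, 0 ≤ εk i) :
    StrongConvexOn univ β (subObj n p lam β f xk yk εk) := by
  have hw : ∀ i, 0 ≤ p * (|xk i| + εk i) ^ (p - 1) := fun i =>
    mul_nonneg hp (Real.rpow_nonneg (add_nonneg (abs_nonneg _) (hεk i)) _)
  have hsplit : subObj n p lam β f xk yk εk = (fun z => β / 2 * ‖z - yk‖ ^ 2) +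
      ((innerSL ℝ (gradient f yk) : Vec n → ℝ) +
        fun z => lam • ∑ i, p * (|xk i| + εk i) ^ (p - 1) * |z i|) := by
    funext z
    simp only [subObj, Pi.add_apply, innerSL_apply_apply, smul_eq_mul]
    ring
  rw [hsplit]
  exact (strongConvexOn_univ_mul_norm_sub_sq β yk).add_convexOn
    (((innerSL ℝ (gradient f yk)).toLinearMap.convexOn convex_univ).add
      ((convexOn_univ_sum_mul_abs hw).smul hlam))

lemma subObj_add_smul_single (xs : Vec n) (i : Fin n) (t : ℝ) :
    subObj n p lam β f xk yk εk (xs + t • EuclideanSpace.single i 1) =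
      subObj n p lam β f xk yk εk xs + t * (gradient f yk i + β * (xs i - yk i)) + β / 2 * t ^ 2
        + lam * (p * (|xk i| + εk i) ^ (p - 1)) * (|xs i + t| - |xs i|) := by
  set e : Vec n := EuclideanSpace.single i 1
  set w : Fin n → ℝ := fun j => p * (|xk j| + εk j) ^ (p - 1)
  have hcoord : ∀ j, (xs + t • e) j = xs j + if j = i then t else 0 := by
    intro j
    by_cases hj : j = i <;> simp [e, hj]
  have hinner : ⟪gradient f yk, xs + t • e⟫_ℝ = ⟪gradient f yk, xs⟫_ℝ + t * gradient f yk i := by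
    rw [inner_add_right, real_inner_smul_right, EuclideanSpace.inner_single_right, one_mul,
      conj_trivial]
  have hnorm : ‖xs + t • e - yk‖ ^ 2 = ‖xs - yk‖ ^ 2 + 2 * t * (xs i - yk i) + t ^ 2 := by
    rw [show xs + t • e - yk = (xs - yk) + t • e by abel, norm_add_sq_real, real_inner_smul_right,
      norm_smul]
    simp [e, EuclideanSpace.inner_single_right]
    ring
  have hsum : ∑ j, w j * |(xs + t • e) j| = ∑ j, w j * |xs j| + w i * (|xs i + t| - |xs i|) := by
    rw [Fintype.sum_eq_add_sum_compl i, Fintype.sum_eq_add_sum_compl i (fun j => w j * |xs j|)]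
    have hrest : ∑ j ∈ {i}ᶜ, w j * |(xs + t • e) j| = ∑ j ∈ {i}ᶜ, w j * |xs j| :=
      Finset.sum_congr rfl fun j hj => by
        have hji : j ≠ i := by simpa using hj
        simp [hcoord, hji]
    rw [hrest, hcoord, if_pos rfl]
    ring
  simp only [subObj, hinner, hnorm]
  rw [hsum]
  ring

lemma subObj_coord_eq_zero {xs : Vec n} (hmin : IsMinOn (subObj n p lam β f xk yk εk) univ xs)
    {i : Fin n} (hxi : xs i ≠ 0) :
    gradient f yk i + β * (xs i - yk i) + lam * (p * (|xk i| + εk i) ^ (p - 1)) * Real.sign (xs i)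
      = 0 := by
  -- Fermat's rule on the `i`-th coordinate line, where `|·|` is differentiable since `xs i ≠ 0`.
  set c := gradient f yk i + β * (xs i - yk i)
  set w := lam * (p * (|xk i| + εk i) ^ (p - 1))
  set φ : ℝ → ℝ := fun t => subObj n p lam β f xk yk εk (xs + t • EuclideanSpace.single i 1)
  have hφmin : IsLocalMin φ 0 := by
    refine IsMinOn.isLocalMin (s := univ) (fun t _ => ?_) univ_mem
    simpa [φ] using hmin (mem_univ (xs + t • EuclideanSpace.single i 1))
  have habs : HasDerivAt (fun t => |xs i + t|) (Real.sign (xs i)) 0 := by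
    rw [Real.sign_eq_coe_sign]
    simpa using (hasDerivAt_abs (by simpa using hxi)).comp_const_add (xs i) 0
  have hφ : HasDerivAt φ (c + w * Real.sign (xs i)) 0 := by
    have := ((((hasDerivAt_id (0 : ℝ)).mul_const c).fun_add
      ((hasDerivAt_pow 2 (0 : ℝ)).const_mul (β / 2))).fun_add
        ((habs.sub_const |xs i|).const_mul w)).const_add (subObj n p lam β f xk yk εk xs)
    refine this.congr_deriv (by simp) |>.congr_of_eventuallyEq (Eventually.of_forall fun t => ?_)
    simp only [φ, subObj_add_smul_single, id]
    ring
  exact hφmin.hasDerivAt_eq_zero hφ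

end Subproblem

section Surrogate

variable {n : ℕ} {p lam β : ℝ} {f : Vec n → ℝ}

lemma le_Fobj_zero (hlam : 0 ≤ lam) (z : Vec n) : f z ≤ Fobj n p lam f z 0 := by
  have : 0 ≤ ∑ i, (|z i| + (0 : Fin n → ℝ) i) ^ p :=
    Finset.sum_nonneg fun i _ => Real.rpow_nonneg (by simp) _
  unfold Fobj
  nlinarith

lemma Fobj_mono (hlam : 0 ≤ lam) (hp : 0 ≤ p) (z : Vec n) {ε ε' : Fin n → ℝ} (hε : 0 ≤ ε)
    (hεε' : ε ≤ ε') : Fobj n p lam f z ε ≤ Fobj n p lam f z ε' := by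
  unfold Fobj
  gcongr with i
  · exact add_nonneg (abs_nonneg _) (hε i)
  · exact hεε' i

lemma Fobj_le_psiObj (hβ : 0 ≤ β) (z y : Vec n) (ε : Fin n → ℝ) :
    Fobj n p lam f z ε ≤ psiObj n p lam β f z y ε :=
  le_add_of_nonneg_right (by positivity)

/-- `f` is replaced by its quadratic upper model at `yk` and each `t ↦ t ^ p` by its tangent at
`|xkᵢ| + εkᵢ`, so this majorizes `F(·, ε)` for `ε ≤ εk` and differs from `subObj` by a constant. -/
def surrogate (n : ℕ) (p lam β : ℝ) (f : Vec n → ℝ) (xk yk : Vec n) (εk : Fin n → ℝ)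
    (z : Vec n) : ℝ :=
  f yk + ⟪gradient f yk, z - yk⟫_ℝ + β / 2 * ‖z - yk‖ ^ 2
    + lam * ∑ i, ((|xk i| + εk i) ^ p + p * (|xk i| + εk i) ^ (p - 1) * (|z i| - |xk i|))

variable {xk yk : Vec n} {εk : Fin n → ℝ}

lemma surrogate_sub_subObj (z z' : Vec n) :
    surrogate n p lam β f xk yk εk z - subObj n p lam β f xk yk εk z
      = surrogate n p lam β f xk yk εk z' - subObj n p lam β f xk yk εk z' := by
  simp only [surrogate, subObj, inner_sub_right, mul_sub, mul_add, Finset.sum_add_distrib,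
    Finset.sum_sub_distrib, Finset.mul_sum]
  ring

lemma Fobj_le_surrogate (hf : Differentiable ℝ f) {L : ℝ}
    (hlip : ∀ a b, ‖gradient f a - gradient f b‖ ≤ L * ‖a - b‖) (hLβ : L ≤ β)
    (hp0 : 0 ≤ p) (hp1 : p ≤ 1) (hlam : 0 ≤ lam) (hεk : ∀ i, 0 < εk i) {ε : Fin n → ℝ}
    (hε : 0 ≤ ε) (hεεk : ε ≤ εk) (z : Vec n) :
    Fobj n p lam f z ε ≤ surrogate n p lam β f xk yk εk z := by
  have hsmooth := le_add_inner_gradient_add_sq hf hlip yk z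
  have htangent : ∑ i, (|z i| + εk i) ^ p
      ≤ ∑ i, ((|xk i| + εk i) ^ p + p * (|xk i| + εk i) ^ (p - 1) * (|z i| - |xk i|)) := by
    gcongr with i
    calc (|z i| + εk i) ^ p
        ≤ (|xk i| + εk i) ^ p
            + p * (|xk i| + εk i) ^ (p - 1) * ((|z i| + εk i) - (|xk i| + εk i)) :=
          rpow_le_rpow_add_mul_sub hp0 hp1 (add_pos_of_nonneg_of_pos (abs_nonneg _) (hεk i))
            (add_nonneg (abs_nonneg _) (hεk i).le)
      _ = _ := by ring
  calc Fobj n p lam f z ε ≤ Fobj n p lam f z εk := Fobj_mono hlam hp0 z hε hεεk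
    _ ≤ surrogate n p lam β f xk yk εk z := by
      unfold Fobj surrogate
      gcongr
      calc f z ≤ f yk + ⟪gradient f yk, z - yk⟫_ℝ + L / 2 * ‖z - yk‖ ^ 2 := hsmooth
        _ ≤ _ := by gcongr

lemma surrogate_self_le_psiObj (hconv : ConvexOn ℝ univ f) (hf : Differentiable ℝ f) :
    surrogate n p lam β f xk yk εk xk ≤ psiObj n p lam β f xk yk εk := by
  have := hconv.add_inner_gradient_le hf yk xk
  simp only [surrogate, psiObj, Fobj, sub_self, mul_zero, add_zero]
  linarith

lemma surrogate_add_sq_le (hlam : 0 ≤ lam) (hp : 0 ≤ p) (hεk : ∀ i, 0 ≤ εk i) {xs : Vec n}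
    (hmin : IsMinOn (subObj n p lam β f xk yk εk) univ xs) (z : Vec n) :
    surrogate n p lam β f xk yk εk xs + β / 2 * ‖z - xs‖ ^ 2
      ≤ surrogate n p lam β f xk yk εk z := by
  have := (strongConvexOn_subObj hlam hp hεk).add_sq_le_of_isMinOn hmin (mem_univ xs) (mem_univ z)
  have := surrogate_sub_subObj (p := p) (lam := lam) (β := β) (f := f) (xk := xk) (yk := yk)
    (εk := εk) xs z
  linarith

end Surrogate

namespace EIRL1

variable {n : ℕ} {p lam β Lf μ αbar : ℝ} {f : Vec n → ℝ} {x y : ℕ → Vec n} {ε : ℕ → Fin n → ℝ}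
  {α : ℕ → ℝ}

lemma eps_pos (H : EIRL1 n p lam β Lf μ αbar f x y ε α) : ∀ k i, 0 < ε k i
  | 0, i => H.hε0 i
  | k + 1, i => H.hεpos k i

lemma eps_le_pow_mul (H : EIRL1 n p lam β Lf μ αbar f x y ε α) (i : Fin n) :
    ∀ k, ε k i ≤ μ ^ k * ε 0 i
  | 0 => by simp
  | k + 1 => by
    calc ε (k + 1) i ≤ μ * ε k i := H.hεdec k i
      _ ≤ μ * (μ ^ k * ε 0 i) := mul_le_mul_of_nonneg_left (H.eps_le_pow_mul i k) H.hμ0.le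
      _ = μ ^ (k + 1) * ε 0 i := by ring

lemma tendsto_eps (H : EIRL1 n p lam β Lf μ αbar f x y ε α) (i : Fin n) :
    Tendsto (fun k => ε k i) atTop (𝓝 0) := by
  refine squeeze_zero (fun k => (H.eps_pos k i).le) (H.eps_le_pow_mul i) ?_
  simpa using (tendsto_pow_atTop_nhds_zero_of_lt_one H.hμ0.le H.hμ1).mul_const (ε 0 i)

lemma isMinOn_subObj (H : EIRL1 n p lam β Lf μ αbar f x y ε α) (k : ℕ) :
    IsMinOn (subObj n p lam β f (x k) (y k) (ε k)) univ (x (k + 1)) := by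
  refine isMinOn_univ_iff.2 fun z => ?_
  rcases eq_or_ne z (x (k + 1)) with rfl | hz
  · exact le_rfl
  · exact (H.hmin k z hz).le

lemma norm_sub_y (H : EIRL1 n p lam β Lf μ αbar f x y ε α) (k : ℕ) :
    ‖y k - x k‖ = α k * ‖x k - x (k - 1)‖ := by
  rw [H.hy k, add_sub_cancel_left, norm_smul, Real.norm_of_nonneg (H.hα0 k)]

lemma psiObj_succ_add_le (H : EIRL1 n p lam β Lf μ αbar f x y ε α) (k : ℕ) :
    psiObj n p lam β f (x (k + 1)) (x k) (ε (k + 1))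
        + β / 2 * (1 - αbar ^ 2) * ‖x k - x (k - 1)‖ ^ 2
      ≤ psiObj n p lam β f (x k) (x (k - 1)) (ε k) := by
  have hεk : ∀ i, 0 < ε k i := H.eps_pos k
  have hmaj := Fobj_le_surrogate (β := β) (xk := x k) (yk := y k) (ε := ε (k + 1))
    (H.hdiff.differentiable one_ne_zero) H.hlip H.hβ.le H.hp0.le H.hp1.le H.hlam.le hεk (fun i => (H.eps_pos (k + 1) i).le)
    (fun i => (H.hεdec k i).trans (mul_le_of_le_one_left (hεk i).le H.hμ1.le)) (x (k + 1))
  have hgrowth := surrogate_add_sq_le H.hlam.le H.hp0.le (fun i => (hεk i).le)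
    (H.isMinOn_subObj k) (x k)
  have hmodel := surrogate_self_le_psiObj (p := p) (lam := lam) (β := β) (xk := x k) (yk := y k)
    (εk := ε k) H.hconv (H.hdiff.differentiable one_ne_zero)
  have hinertia : β / 2 * ‖x k - y k‖ ^ 2 ≤ β / 2 * (αbar ^ 2 * ‖x k - x (k - 1)‖ ^ 2) := by
    rw [norm_sub_rev, H.norm_sub_y, mul_pow]
    have := H.hLf.trans_lt H.hβ
    gcongr
    exacts [H.hα0 k, H.hα1 k]
  simp only [psiObj, norm_sub_rev (x k) (x (k + 1))] at *
  linarith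

lemma decrease_coeff_pos (H : EIRL1 n p lam β Lf μ αbar f x y ε α) :
    0 < β / 2 * (1 - αbar ^ 2) := by
  have := H.hLf.trans_lt H.hβ
  have : αbar ^ 2 < 1 := pow_lt_one₀ H.hαbar0 H.hαbar1 two_ne_zero
  nlinarith

lemma psiObj_antitone (H : EIRL1 n p lam β Lf μ αbar f x y ε α) :
    Antitone fun k => psiObj n p lam β f (x k) (x (k - 1)) (ε k) := by
  refine antitone_nat_of_succ_le fun k => le_trans ?_ (H.psiObj_succ_add_le k)
  exact le_add_of_nonneg_right (mul_nonneg H.decrease_coeff_pos.le (sq_nonneg _))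

lemma exists_le_psiObj (H : EIRL1 n p lam β Lf μ αbar f x y ε α) :
    ∃ m, ∀ k, m ≤ psiObj n p lam β f (x k) (x (k - 1)) (ε k) := by
  obtain ⟨m, hm⟩ := H.hlevel.isCompact_closure.bddBelow_image H.hdiff.continuous.continuousOn
  refine ⟨m, fun k => ?_⟩
  have hβ : 0 ≤ β := H.hLf.trans H.hβ.le
  have hεk : 0 ≤ ε k := fun i => (H.eps_pos k i).le
  have hF : Fobj n p lam f (x k) (ε k) ≤ psiObj n p lam β f (x k) (x (k - 1)) (ε k) :=
    Fobj_le_psiObj hβ _ _ _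
  have hmem : Fobj n p lam f (x k) 0 ≤ Fobj n p lam f (x 0) (ε 0) := by
    have := (Fobj_mono H.hlam.le H.hp0.le (x k) le_rfl hεk).trans
      (hF.trans (H.psiObj_antitone (Nat.zero_le k)))
    simpa [psiObj] using this
  calc m ≤ f (x k) := hm ⟨x k, subset_closure hmem, rfl⟩
    _ ≤ Fobj n p lam f (x k) 0 := le_Fobj_zero H.hlam.le _
    _ ≤ Fobj n p lam f (x k) (ε k) := Fobj_mono H.hlam.le H.hp0.le (x k) le_rfl hεk
    _ ≤ _ := hF

lemma tendsto_sub_pred (H : EIRL1 n p lam β Lf μ αbar f x y ε α) :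
    Tendsto (fun k => x k - x (k - 1)) atTop (𝓝 0) := by
  obtain ⟨m, hm⟩ := H.exists_le_psiObj
  have hc := H.decrease_coeff_pos
  have hsum := summable_of_succ_add_le (fun k => mul_nonneg hc.le (sq_nonneg _))
    H.psiObj_succ_add_le hm
  have hsq : Tendsto (fun k => ‖x k - x (k - 1)‖ ^ 2) atTop (𝓝 0) := by
    have := hsum.tendsto_atTop_zero.const_mul (β / 2 * (1 - αbar ^ 2))⁻¹
    rw [mul_zero] at this
    exact this.congr fun k => inv_mul_cancel_left₀ hc.ne' _
  rw [tendsto_zero_iff_norm_tendsto_zero]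
  simpa using hsq.sqrt

lemma tendsto_succ_sub (H : EIRL1 n p lam β Lf μ αbar f x y ε α) :
    Tendsto (fun k => x (k + 1) - x k) atTop (𝓝 0) :=
  (tendsto_add_atTop_iff_nat 1).2 H.tendsto_sub_pred

lemma tendsto_y_sub (H : EIRL1 n p lam β Lf μ αbar f x y ε α) :
    Tendsto (fun k => y k - x k) atTop (𝓝 0) := by
  rw [tendsto_zero_iff_norm_tendsto_zero]
  refine squeeze_zero (fun k => norm_nonneg _) (fun k => ?_)
    (tendsto_zero_iff_norm_tendsto_zero.1 H.tendsto_sub_pred)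
  rw [H.norm_sub_y]
  exact mul_le_of_le_one_left (norm_nonneg _) ((H.hα1 k).trans H.hαbar1.le)

end EIRL1

/-- Theorem 3.1(ii): every cluster point `x*` of `{xᵏ}` is a first-order
stationary point of `F(·, 0)`: for every `i` with `xᵢ* ≠ 0`,
`∇ᵢ f(x*) + λ p |xᵢ*|^{p−1} sign(xᵢ*) = 0`. -/
theorem stmt_12 (n : ℕ) (p lam β Lf μ αbar : ℝ) (f : Vec n → ℝ)
    (x y : ℕ → Vec n) (ε : ℕ → Fin n → ℝ) (α : ℕ → ℝ)
    (H : EIRL1 n p lam β Lf μ αbar f x y ε α) :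
    ∀ xstar : Vec n, MapClusterPt xstar atTop x →
      ∀ i, xstar i ≠ 0 →
        gradient f xstar i + lam * p * |xstar i| ^ (p - 1) * Real.sign (xstar i) = 0 := by
  intro xstar hclus i hxi
  obtain ⟨φ, hφ, hxφ⟩ := hclus.tendsto_subseq
  have hx1 := hxφ.comp_of_tendsto_sub hφ.tendsto_atTop H.tendsto_succ_sub
  have hy := hxφ.comp_of_tendsto_sub hφ.tendsto_atTop H.tendsto_y_sub
  have coord : ∀ {v : ℕ → Vec n} {a : Vec n}, Tendsto v atTop (𝓝 a) →
      Tendsto (fun m => v m i) atTop (𝓝 (a i)) :=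
    fun h => ((PiLp.continuous_apply 2 _ i).tendsto _).comp h
  have hw : Tendsto (fun m => p * (|x (φ m) i| + ε (φ m) i) ^ (p - 1)) atTop
      (𝓝 (p * |xstar i| ^ (p - 1))) := by
    have := ((coord hxφ).abs.add ((H.tendsto_eps i).comp hφ.tendsto_atTop)).rpow_const (p := p - 1)
      (Or.inl (by simpa using hxi))
    simpa using this.const_mul p
  have hlim := ((coord ((H.hdiff.continuous_gradient.tendsto xstar).comp hy)).add
    (((coord hx1).sub (coord hy)).const_mul β)).add
      ((hw.const_mul lam).mul_const (Real.sign (xstar i)))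
  have hzero : _ = (0 : ℝ) := tendsto_nhds_unique hlim (tendsto_const_nhds.congr' ?_)
  · simp only [sub_self, mul_zero, add_zero] at hzero
    linear_combination hzero
  filter_upwards [(coord hx1).eventually (Real.eventually_sign_eq hxi)] with m hm
  simp only [Function.comp_apply] at hm ⊢
  have hxm : x (φ m + 1) i ≠ 0 := by
    intro h0
    rw [h0, Real.sign_zero, eq_comm, Real.sign_eq_zero_iff] at hm
    exact hxi hm
  rw [← hm]
  exact (subObj_coord_eq_zero (H.isMinOn_subObj (φ m)) hxm).symm
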